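/- arXiv:1701.04766 — 2 statements merged into one kernel-verified Lean document; each statement's English description precedes it below -/
import Mathlib

section
/- Let α, β be real numbers, let y1, y2 : ℝ → ℝ be twice differentiable, and define u1(t) := ẏ1(t) + (α·y1(t) + β·y2(t))·y2(t), u2(t) := ẏ2(t) − (α·y1(t) + β·y2(t))·y1(t). Let 𝓛 : ℝ⁴ → ℝ be 𝓛(y1, y2, v1, v2) = ½[(v1 + (α·y1 + β·y2)·y2)² + (v2 − (α·y1 + β·y2)·y1)²]. Then (y1, y2) satisfies the Euler–Lagrange equations d/dt[∂𝓛/∂v_i (y1, y2, ẏ1, ẏ2)] = ∂𝓛/∂y_i (y1, y2, ẏ1, ẏ2) for i = 1, 2 at every t if and only if u̇1 = α·y2·u1 − (2α·y1 + β·y2)·u2 and u̇2 = (α·y1 + 2β·y2)·u1 − β·y1·u2 at every t. -/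
/-- For the optimal control of the Euler–Poincaré–Suslov system on
`𝔰𝔬(3)`, the Euler–Lagrange equations of the cost Lagrangian
`𝓛(y1,y2,v1,v2) = ½[(v1 + (αy1+βy2)y2)² + (v2 − (αy1+βy2)y1)²]` are equivalent
to `u̇1 = αy2·u1 − (2αy1+βy2)·u2`, `u̇2 = (αy1+2βy2)·u1 − βy1·u2`. -/
theorem stmt13 (α β : ℝ) (y1 y2 : ℝ → ℝ)
    (hy1 : Differentiable ℝ y1) (hy1' : Differentiable ℝ (deriv y1))
    (hy2 : Differentiable ℝ y2) (hy2' : Differentiable ℝ (deriv y2))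
    (L : ℝ → ℝ → ℝ → ℝ → ℝ)
    (hL : ∀ a b v1 v2 : ℝ, L a b v1 v2 =
      (1/2) * ((v1 + (α*a + β*b)*b)^2 + (v2 - (α*a + β*b)*a)^2))
    (u1 u2 : ℝ → ℝ)
    (hu1 : ∀ t, u1 t = deriv y1 t + (α * y1 t + β * y2 t) * y2 t)
    (hu2 : ∀ t, u2 t = deriv y2 t - (α * y1 t + β * y2 t) * y1 t) :
    ((∀ t : ℝ,
        deriv (fun s => deriv (fun v => L (y1 s) (y2 s) v (deriv y2 s)) (deriv y1 s)) t
          = deriv (fun w => L w (y2 t) (deriv y1 t) (deriv y2 t)) (y1 t)) ∧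
     (∀ t : ℝ,
        deriv (fun s => deriv (fun v => L (y1 s) (y2 s) (deriv y1 s) v) (deriv y2 s)) t
          = deriv (fun w => L (y1 t) w (deriv y1 t) (deriv y2 t)) (y2 t)))
    ↔ (∀ t : ℝ,
        deriv u1 t = α * y2 t * u1 t - (2*α*y1 t + β*y2 t) * u2 t ∧
        deriv u2 t = (α * y1 t + 2*β*y2 t) * u1 t - β * y1 t * u2 t) := by
  -- ∂L/∂v1
  have hdv1 : ∀ a b v1 v2 : ℝ, deriv (fun v => L a b v v2) v1 = v1 + (α*a+β*b)*b := by
    intro a b v1 v2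
    rw [show (fun v => L a b v v2)
        = fun v => (1/2)*((v + (α*a + β*b)*b)^2 + (v2 - (α*a + β*b)*a)^2)
        from funext fun v => hL a b v v2]
    have h1 : HasDerivAt (fun v : ℝ => (v + (α*a + β*b)*b)^2)
        (2*(v1+(α*a+β*b)*b)) v1 := by
      simpa using ((hasDerivAt_id v1).add_const ((α*a + β*b)*b)).fun_pow 2
    have h := ((h1.add_const ((v2 - (α*a + β*b)*a)^2)).const_mul (1/2))
    rw [h.deriv]; ring
  -- ∂L/∂v2
  have hdv2 : ∀ a b v1 v2 : ℝ, deriv (fun v => L a b v1 v) v2 = v2 - (α*a+β*b)*a := by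
    intro a b v1 v2
    rw [show (fun v => L a b v1 v)
        = fun v => (1/2)*((v1 + (α*a + β*b)*b)^2 + (v - (α*a + β*b)*a)^2)
        from funext fun v => hL a b v1 v]
    have h1 : HasDerivAt (fun v : ℝ => (v - (α*a + β*b)*a)^2)
        (2*(v2-(α*a+β*b)*a)) v2 := by
      simpa using ((hasDerivAt_id v2).sub_const ((α*a + β*b)*a)).fun_pow 2
    have h := ((h1.const_add ((v1 + (α*a + β*b)*b)^2)).const_mul (1/2))
    rw [h.deriv]; ring
  -- ∂L/∂a
  have hda : ∀ a b v1 v2 : ℝ, deriv (fun w => L w b v1 v2) a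
      = (v1 + (α*a+β*b)*b)*(α*b) - (v2 - (α*a+β*b)*a)*(2*α*a+β*b) := by
    intro a b v1 v2
    rw [show (fun w => L w b v1 v2)
        = fun w => (1/2)*((v1 + (α*w + β*b)*b)^2 + (v2 - (α*w + β*b)*w)^2)
        from funext fun w => hL w b v1 v2]
    have h1 : HasDerivAt (fun w : ℝ => α*w + β*b) α a := by
      simpa using ((hasDerivAt_id a).const_mul α).add_const (β*b)
    have h4 : HasDerivAt (fun w : ℝ => (v1 + (α*w + β*b)*b)^2)
        (2*(v1 + (α*a+β*b)*b)^1*(α*b)) a := ((h1.mul_const b).const_add v1).pow 2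
    have h5 : HasDerivAt (fun w : ℝ => (α*w + β*b)*w)
        (α * a + (α*a+β*b) * 1) a := h1.mul (hasDerivAt_id a)
    have h7 : HasDerivAt (fun w : ℝ => (v2 - (α*w + β*b)*w)^2)
        (2*(v2 - (α*a+β*b)*a)^1*(-(α * a + (α*a+β*b) * 1))) a :=
      (h5.const_sub v2).pow 2
    have h := (h4.fun_add h7).const_mul (1/2)
    rw [h.deriv]; ring
  -- ∂L/∂b
  have hdb : ∀ a b v1 v2 : ℝ, deriv (fun w => L a w v1 v2) b
      = (v1 + (α*a+β*b)*b)*(α*a+2*β*b) - (v2 - (α*a+β*b)*a)*(β*a) := by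
    intro a b v1 v2
    rw [show (fun w => L a w v1 v2)
        = fun w => (1/2)*((v1 + (α*a + β*w)*w)^2 + (v2 - (α*a + β*w)*a)^2)
        from funext fun w => hL a w v1 v2]
    have h1 : HasDerivAt (fun w : ℝ => α*a + β*w) β b := by
      simpa using ((hasDerivAt_id b).const_mul β).const_add (α*a)
    have h5 : HasDerivAt (fun w : ℝ => (α*a + β*w)*w)
        (β * b + (α*a+β*b) * 1) b := h1.mul (hasDerivAt_id b)
    have h4 : HasDerivAt (fun w : ℝ => (v1 + (α*a + β*w)*w)^2)
        (2*(v1 + (α*a+β*b)*b)^1*(β * b + (α*a+β*b) * 1)) b := (h5.const_add v1).pow 2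
    have h7 : HasDerivAt (fun w : ℝ => (v2 - (α*a + β*w)*a)^2)
        (2*(v2 - (α*a+β*b)*a)^1*(-(β*a))) b := ((h1.mul_const a).const_sub v2).pow 2
    have h := (h4.fun_add h7).const_mul (1/2)
    rw [h.deriv]; ring
  have e1 : ∀ t : ℝ, deriv (fun s => deriv (fun v => L (y1 s) (y2 s) v (deriv y2 s)) (deriv y1 s)) t = deriv u1 t := by
    intro t
    congr 1
    funext s
    rw [hdv1, ← hu1]
  have e2 : ∀ t : ℝ, deriv (fun s => deriv (fun v => L (y1 s) (y2 s) (deriv y1 s) v) (deriv y2 s)) t = deriv u2 t := by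
    intro t
    congr 1
    funext s
    rw [hdv2, ← hu2]
  have e3 : ∀ t : ℝ, deriv (fun w => L w (y2 t) (deriv y1 t) (deriv y2 t)) (y1 t)
      = α * y2 t * u1 t - (2*α*y1 t + β*y2 t) * u2 t := by
    intro t; rw [hda, ← hu1, ← hu2]; ring
  have e4 : ∀ t : ℝ, deriv (fun w => L (y1 t) w (deriv y1 t) (deriv y2 t)) (y2 t)
      = (α * y1 t + 2*β*y2 t) * u1 t - β * y1 t * u2 t := by
    intro t; rw [hdb, ← hu1, ← hu2]; ring
  constructor
  · rintro ⟨h1, h2⟩ t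
    exact ⟨by rw [← e1, h1, e3], by rw [← e2, h2, e4]⟩
  · intro h
    exact ⟨fun t => by rw [e1, (h t).1, e3], fun t => by rw [e2, (h t).2, e4]⟩
end

section
/- Let m, J, a, b be real numbers with J + ma² ≠ 0, set c := ma/(J + ma²) and K := J + m(a² + b²). Let y1, y2 : ℝ → ℝ be twice differentiable and define u1 := ẏ1 − c·b·y1² + c·y1·y2 and u2 := ẏ2 − c·K·y1² + c·b·y1·y2. Let 𝓛 : ℝ⁴ → ℝ be 𝓛(y1, y2, v1, v2) = ½[(v1 − c·b·y1² + c·y1·y2)² + (v2 − c·K·y1² + c·b·y1·y2)²]. Then (y1, y2) satisfies the Euler–Lagrange equations d/dt[∂𝓛/∂v_i (y1, y2, ẏ1, ẏ2)] = ∂𝓛/∂y_i (y1, y2, ẏ1, ẏ2) for i = 1, 2 at every t if and only if u̇1 = c·(y2 − 2b·y1)·u1 + c·(b·y2 − 2K·y1)·u2 and u̇2 = c·y1·u1 + c·b·y1·u2 at every t. -/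
/-!
Each control `uᵢ` is the velocity `vᵢ` plus a function of the configuration, so the velocity
partials of `𝓛 = ½(u1² + u2²)` are the controls themselves and the left-hand sides of the
Euler–Lagrange equations are `u̇1, u̇2`. The configuration partials are
`u1 ∂u1/∂yᵢ + u2 ∂u2/∂yᵢ`, which expand to the right-hand sides of the stated system.
-/

theorem hasDerivAt_half_sq_add_sq {f g : ℝ → ℝ} {f' g' x : ℝ} (hf : HasDerivAt f f' x)
    (hg : HasDerivAt g g' x) :
    HasDerivAt (fun w => (1/2) * (f w ^ 2 + g w ^ 2)) (f x * f' + g x * g') x := by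
  refine (((hf.pow 2).add (hg.pow 2)).const_mul (1/2 : ℝ)).congr_deriv ?_
  push_cast
  ring

namespace ChaplyginSleigh

variable (b c K : ℝ)

def control1 (x y v : ℝ) : ℝ := v - c*b*x^2 + c*x*y

def control2 (x y v : ℝ) : ℝ := v - c*K*x^2 + c*b*x*y

noncomputable def lagrangian (x y v1 v2 : ℝ) : ℝ :=
  (1/2) * (control1 b c x y v1 ^ 2 + control2 b c K x y v2 ^ 2)

theorem hasDerivAt_control1_v (x y v : ℝ) :
    HasDerivAt (fun w => control1 b c x y w) 1 v :=
  ((hasDerivAt_id' v).sub_const (c*b*x^2)).add_const (c*x*y)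

theorem hasDerivAt_control2_v (x y v : ℝ) :
    HasDerivAt (fun w => control2 b c K x y w) 1 v :=
  ((hasDerivAt_id' v).sub_const (c*K*x^2)).add_const (c*b*x*y)

theorem hasDerivAt_control1_x (x y v : ℝ) :
    HasDerivAt (fun w => control1 b c w y v) (c*(y - 2*b*x)) x := by
  refine (((hasDerivAt_pow 2 x).const_mul (c*b)).const_sub v |>.add
    (((hasDerivAt_id' x).const_mul c).mul_const y)).congr_deriv ?_
  push_cast
  ring

theorem hasDerivAt_control2_x (x y v : ℝ) :
    HasDerivAt (fun w => control2 b c K w y v) (c*(b*y - 2*K*x)) x := by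
  refine (((hasDerivAt_pow 2 x).const_mul (c*K)).const_sub v |>.add
    (((hasDerivAt_id' x).const_mul (c*b)).mul_const y)).congr_deriv ?_
  push_cast
  ring

theorem hasDerivAt_control1_y (x y v : ℝ) :
    HasDerivAt (fun w => control1 b c x w v) (c*x) y :=
  (((hasDerivAt_id' y).const_mul (c*x)).const_add (v - c*b*x^2)).congr_deriv (mul_one _)

theorem hasDerivAt_control2_y (x y v : ℝ) :
    HasDerivAt (fun w => control2 b c K x w v) (c*b*x) y :=
  (((hasDerivAt_id' y).const_mul (c*b*x)).const_add (v - c*K*x^2)).congr_deriv (mul_one _)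

theorem deriv_lagrangian_v1 (x y v1 v2 : ℝ) :
    deriv (fun v => lagrangian b c K x y v v2) v1 = control1 b c x y v1 :=
  (hasDerivAt_half_sq_add_sq (hasDerivAt_control1_v b c x y v1)
    (hasDerivAt_const v1 (control2 b c K x y v2))).deriv.trans (by ring)

theorem deriv_lagrangian_v2 (x y v1 v2 : ℝ) :
    deriv (fun v => lagrangian b c K x y v1 v) v2 = control2 b c K x y v2 :=
  (hasDerivAt_half_sq_add_sq (hasDerivAt_const v2 (control1 b c x y v1))
    (hasDerivAt_control2_v b c K x y v2)).deriv.trans (by ring)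

theorem deriv_lagrangian_x (x y v1 v2 : ℝ) :
    deriv (fun w => lagrangian b c K w y v1 v2) x
      = c*(y - 2*b*x) * control1 b c x y v1 + c*(b*y - 2*K*x) * control2 b c K x y v2 :=
  (hasDerivAt_half_sq_add_sq (hasDerivAt_control1_x b c x y v1)
    (hasDerivAt_control2_x b c K x y v2)).deriv.trans (by ring)

theorem deriv_lagrangian_y (x y v1 v2 : ℝ) :
    deriv (fun w => lagrangian b c K x w v1 v2) y
      = c*x * control1 b c x y v1 + c*b*x * control2 b c K x y v2 :=
  (hasDerivAt_half_sq_add_sq (hasDerivAt_control1_y b c x y v1)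
    (hasDerivAt_control2_y b c K x y v2)).deriv.trans (by ring)

end ChaplyginSleigh

open ChaplyginSleigh

theorem stmt16_general (b : ℝ)
    (c K : ℝ)
    (y1 y2 : ℝ → ℝ)
    (L : ℝ → ℝ → ℝ → ℝ → ℝ)
    (hL : ∀ x y v1 v2 : ℝ, L x y v1 v2 =
      (1/2) * ((v1 - c*b*x^2 + c*x*y)^2 + (v2 - c*K*x^2 + c*b*x*y)^2))
    (u1 u2 : ℝ → ℝ)
    (hu1 : ∀ t, u1 t = deriv y1 t - c*b*(y1 t)^2 + c*(y1 t)*(y2 t))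
    (hu2 : ∀ t, u2 t = deriv y2 t - c*K*(y1 t)^2 + c*b*(y1 t)*(y2 t)) :
    ((∀ t : ℝ,
        deriv (fun s => deriv (fun v => L (y1 s) (y2 s) v (deriv y2 s)) (deriv y1 s)) t
          = deriv (fun w => L w (y2 t) (deriv y1 t) (deriv y2 t)) (y1 t)) ∧
     (∀ t : ℝ,
        deriv (fun s => deriv (fun v => L (y1 s) (y2 s) (deriv y1 s) v) (deriv y2 s)) t
          = deriv (fun w => L (y1 t) w (deriv y1 t) (deriv y2 t)) (y2 t)))
    ↔ (∀ t : ℝ,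
        deriv u1 t = c*(y2 t - 2*b*(y1 t))*(u1 t) + c*(b*(y2 t) - 2*K*(y1 t))*(u2 t) ∧
        deriv u2 t = c*(y1 t)*(u1 t) + c*b*(y1 t)*(u2 t)) := by
  obtain rfl : L = lagrangian b c K :=
    funext fun x => funext fun y => funext fun v1 => funext (hL x y v1)
  have hu1 : ∀ t, u1 t = control1 b c (y1 t) (y2 t) (deriv y1 t) := hu1
  have hu2 : ∀ t, u2 t = control2 b c K (y1 t) (y2 t) (deriv y2 t) := hu2
  simp only [deriv_lagrangian_v1, deriv_lagrangian_v2, deriv_lagrangian_x, deriv_lagrangian_y,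
    ← hu1, ← hu2]
  exact forall_and.symm

/-- For the optimal control of the Chaplygin sleigh, with
`c = ma/(J+ma²)` and `K = J + m(a²+b²)`, the Euler–Lagrange equations of the
cost Lagrangian `𝓛(y1,y2,v1,v2) = ½[(v1 − cby1² + cy1y2)² + (v2 − cKy1² + cby1y2)²]`
are equivalent to `u̇1 = c(y2 − 2by1)u1 + c(by2 − 2Ky1)u2`, `u̇2 = cy1·u1 + cby1·u2`. -/
theorem stmt16 (m J a b : ℝ) (hJ : J + m*a^2 ≠ 0)
    (c K : ℝ) (hc : c = m*a/(J + m*a^2)) (hK : K = J + m*(a^2 + b^2))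
    (y1 y2 : ℝ → ℝ)
    (hy1 : Differentiable ℝ y1) (hy1' : Differentiable ℝ (deriv y1))
    (hy2 : Differentiable ℝ y2) (hy2' : Differentiable ℝ (deriv y2))
    (L : ℝ → ℝ → ℝ → ℝ → ℝ)
    (hL : ∀ x y v1 v2 : ℝ, L x y v1 v2 =
      (1/2) * ((v1 - c*b*x^2 + c*x*y)^2 + (v2 - c*K*x^2 + c*b*x*y)^2))
    (u1 u2 : ℝ → ℝ)
    (hu1 : ∀ t, u1 t = deriv y1 t - c*b*(y1 t)^2 + c*(y1 t)*(y2 t))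
    (hu2 : ∀ t, u2 t = deriv y2 t - c*K*(y1 t)^2 + c*b*(y1 t)*(y2 t)) :
    ((∀ t : ℝ,
        deriv (fun s => deriv (fun v => L (y1 s) (y2 s) v (deriv y2 s)) (deriv y1 s)) t
          = deriv (fun w => L w (y2 t) (deriv y1 t) (deriv y2 t)) (y1 t)) ∧
     (∀ t : ℝ,
        deriv (fun s => deriv (fun v => L (y1 s) (y2 s) (deriv y1 s) v) (deriv y2 s)) t
          = deriv (fun w => L (y1 t) w (deriv y1 t) (deriv y2 t)) (y2 t)))
    ↔ (∀ t : ℝ,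
        deriv u1 t = c*(y2 t - 2*b*(y1 t))*(u1 t) + c*(b*(y2 t) - 2*K*(y1 t))*(u2 t) ∧
        deriv u2 t = c*(y1 t)*(u1 t) + c*b*(y1 t)*(u2 t)) :=
  stmt16_general b c K y1 y2 L hL u1 u2 hu1 hu2
end
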